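/- arXiv:2407.02619 — 2 statements merged into one kernel-verified Lean document; each statement's English description precedes it below -/
import Mathlib

section
/- In ℝ^n equipped with a signed seminorm ||·||^sgn with maximal value a = max_v ||v||^sgn > 0, the set A = {v : ||v||^sgn = a} is a convex cone, and there exists a linear functional w ∈ (ℝ^n)^* such that the interior of A equals {v : ⟨v,w⟩ > 0}, the closure of A equals {v : ⟨v,w⟩ ≥ 0}, and the boundary of A equals the hyperplane w^⊥. -/
noncomputable section

variable {K : Type*} [Field K] [LinearOrder K] [IsStrictOrderedRing K] {V : Type*} [AddCommGroup V] [Module K V]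

/-- The sign of an element of a linear ordered field, as a real number. -/
def sgn (x : K) : ℝ := if 0 < x then 1 else if x < 0 then -1 else 0

/-- The trivial absolute value. -/
def trivabs (x : K) : ℝ := if x = 0 then 0 else 1

/-- `K` is real closed. -/
def IsRealClosed' (K : Type*) [Field K] [LinearOrder K] [IsStrictOrderedRing K] : Prop :=
  (∀ x : K, 0 ≤ x → ∃ y, y * y = x) ∧
  ∀ p : Polynomial K, Odd p.natDegree → ∃ x, p.eval x = 0

/-- A signed seminorm on `V` with respect to the trivial absolute value on `K`
(note `sgn c * trivabs c = sgn c`). -/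
def IsSignedSeminormTriv (N : V → ℝ) : Prop :=
  (∀ (c : K) (v : V), N (c • v) = sgn c * N v) ∧
  (∀ v w : V, min (N v) (N w) ≤ N (v + w) ∧ N (v + w) ≤ max (N v) (N w))

/-!
`N` is invariant under positive scaling and its value on a sum lies between its values on the
summands, so `A = {N = a}` and `-A = {N = -a}` are disjoint convex cones, `B = {|N| < a}` is a
proper subspace, `ℝⁿ = A ∪ B ∪ -A`, and maximality of `a` gives `A + B ⊆ A`. The convex set `A`
has nonempty interior, as otherwise `A`, `-A` and `B` would all be Lebesgue-null. Separating
`interior A` from `-A` by a functional `w` gives `w ≥ 0` on `A` and `w ≤ 0` on `-A`, and `w = 0`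
on `B` because `w` is bounded below on `v₀ + B` for any `v₀ ∈ A`. Hence `{w > 0} ⊆ A ⊆ {w ≥ 0}`,
and since the nonzero functional `w` is an open map this determines the interior, closure and
frontier of `A`.
-/

open MeasureTheory Filter Topology

namespace IsSignedSeminormTriv

variable {N : V → ℝ} (hN : IsSignedSeminormTriv (K := K) N)
include hN

section

omit [IsStrictOrderedRing K]

theorem map_smul_of_pos {c : K} (hc : 0 < c) (v : V) : N (c • v) = N v := by
  simp [hN.1, sgn, hc]

theorem map_zero : N 0 = 0 := by
  simpa [sgn] using hN.1 (0 : K) 0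

theorem abs_map_add_le_max (v w : V) : |N (v + w)| ≤ max |N v| |N w| := by
  obtain ⟨hmin, hmax⟩ := hN.2 v w
  rw [abs_le]
  constructor
  · refine le_trans (le_min ?_ ?_) hmin
    · exact (neg_le_neg (le_max_left _ _)).trans (neg_abs_le _)
    · exact (neg_le_neg (le_max_right _ _)).trans (neg_abs_le _)
  · exact hmax.trans (max_le_max (le_abs_self _) (le_abs_self _))

def levelCone (b : ℝ) : ConvexCone K V where
  carrier := {v | N v = b}
  smul_mem' _ hc v hv := (hN.map_smul_of_pos hc v).trans hv
  add_mem' v (hv : N v = b) w (hw : N w = b) := by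
    have := hN.2 v w
    rw [hv, hw, min_self, max_self] at this
    exact le_antisymm this.2 this.1

@[simp]
theorem mem_levelCone {b : ℝ} {v : V} : v ∈ hN.levelCone b ↔ N v = b := Iff.rfl

def absLtSubmodule {b : ℝ} (hb : 0 < b) : Submodule K V where
  carrier := {v | |N v| < b}
  zero_mem' := by simpa [hN.map_zero] using hb
  add_mem' {v w} hv hw := (hN.abs_map_add_le_max v w).trans_lt (max_lt hv hw)
  smul_mem' c v hv := by
    have hsgn : |sgn c| ≤ 1 := by unfold sgn; split_ifs <;> simp
    calc |N (c • v)| = |sgn c| * |N v| := by rw [hN.1, abs_mul]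
      _ ≤ |N v| := mul_le_of_le_one_left (abs_nonneg _) hsgn
      _ < b := hv

@[simp]
theorem mem_absLtSubmodule {b : ℝ} (hb : 0 < b) {v : V} : v ∈ hN.absLtSubmodule hb ↔ |N v| < b :=
  Iff.rfl

end

theorem map_neg (v : V) : N (-v) = -N v := by
  have : ¬ (1 : K) < 0 := not_lt.mpr zero_le_one
  simpa [sgn, this] using hN.1 (-1) v

variable {a : ℝ} (hub : ∀ v, N v ≤ a)
include hub

theorem neg_le_map (v : V) : -a ≤ N v :=
  neg_le.mpr (by simpa [hN.map_neg] using hub (-v))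

theorem map_eq_or_abs_lt_or_map_neg_eq (v : V) : N v = a ∨ |N v| < a ∨ N (-v) = a := by
  rw [hN.map_neg, neg_eq_iff_eq_neg, abs_lt]
  rcases (hub v).eq_or_lt with h | h
  · exact .inl h
  rcases (hN.neg_le_map hub v).eq_or_lt with h' | h'
  · exact .inr (.inr h'.symm)
  · exact .inr (.inl ⟨h', h⟩)

theorem map_add_eq_of_neg_lt {v u : V} (hv : N v = a) (hu : -a < N u) : N (v + u) = a := by
  refine (hub _).antisymm (not_lt.mp fun h => ?_)
  have hneg : N (-u) < a := by rw [hN.map_neg]; linarith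
  have := (hN.2 (v + u) (-u)).2
  rw [add_neg_cancel_right] at this
  exact (this.trans_lt (max_lt h hneg)).ne hv

end IsSignedSeminormTriv

theorem LinearMap.map_eq_zero_of_forall_nonneg_map_add_smul {f : V →ₗ[K] K} {v u : V}
    (h : ∀ t : K, 0 ≤ f (v + t • u)) : f u = 0 := by
  by_contra hu
  have := h (-(f v + 1) / f u)
  rw [map_add, map_smul, smul_eq_mul, div_mul_cancel₀ _ hu] at this
  linarith

section Topology

variable {E : Type*} [TopologicalSpace E] [AddCommGroup E] [Module ℝ E]

theorem exists_strongDual_pos_of_disjoint_convexCone [IsTopologicalAddGroup E]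
    [ContinuousSMul ℝ E] {s : Set E} (hs : Convex ℝ s) (hs_open : IsOpen s) (C : ConvexCone ℝ E)
    (hC : (C : Set E).Nonempty) (hdisj : Disjoint s C) :
    ∃ f : StrongDual ℝ E, (∀ x ∈ s, 0 < f x) ∧ ∀ y ∈ C, f y ≤ 0 := by
  obtain ⟨f, u, hs_lt, hC_ge⟩ := geometric_hahn_banach_open hs hs_open C.convex hdisj
  -- `u ≤ f (c • y) = c * f y` for all `c > 0`; let `c → ∞`, resp. `c → 0⁺`.
  have hC_ge' : ∀ y ∈ C, ∀ c : ℝ, 0 < c → u ≤ c * f y := fun y hy c hc => by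
    simpa using hC_ge _ (C.smul_mem hc hy)
  have hC_nonneg : ∀ y ∈ C, 0 ≤ f y := fun y hy =>
    le_of_tendsto (tendsto_const_nhds.div_atTop tendsto_id) <|
      (eventually_gt_atTop 0).mono fun c hc => (div_le_iff₀' hc).mpr (hC_ge' y hy c hc)
  have hu : u ≤ 0 := by
    obtain ⟨y, hy⟩ := hC
    refine ge_of_tendsto (?_ : Tendsto (fun c : ℝ => c * f y) (𝓝[>] 0) (𝓝 0)) <|
      eventually_nhdsWithin_of_forall fun c hc => hC_ge' y hy c hc
    exact ((continuous_id.mul continuous_const).tendsto' 0 0 (by simp)).mono_left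
      nhdsWithin_le_nhds
  exact ⟨-f, fun x hx => by simpa using (hs_lt x hx).trans_le hu,
    fun y hy => by simpa using hC_nonneg y hy⟩

theorem interior_closure_frontier_eq_of_setOf_pos_subset_of_subset_setOf_nonneg
    [ContinuousAdd E] [ContinuousSMul ℝ E] {f : StrongDual ℝ E} (hf : f ≠ 0) {A : Set E}
    (hpos : {v | 0 < f v} ⊆ A) (hnonneg : A ⊆ {v | 0 ≤ f v}) :
    interior A = {v | 0 < f v} ∧ closure A = {v | 0 ≤ f v} ∧ frontier A = {v | f v = 0} := by
  have hopen := f.isOpenMap_of_ne_zero hf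
  have hint : interior A = {v | 0 < f v} := by
    refine (interior_mono hnonneg).trans ?_ |>.antisymm
      (interior_maximal hpos (isOpen_lt continuous_const f.continuous))
    rw [show {v | 0 ≤ f v} = f ⁻¹' Set.Ici 0 from rfl,
      ← hopen.preimage_interior_eq_interior_preimage f.continuous, interior_Ici]
    rfl
  have hcl : closure A = {v | 0 ≤ f v} := by
    refine (closure_minimal hnonneg (isClosed_le continuous_const f.continuous)).antisymm ?_
    refine (le_of_eq ?_).trans (closure_mono hpos)
    rw [show {v | 0 < f v} = f ⁻¹' Set.Ioi 0 from rfl,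
      ← hopen.preimage_closure_eq_closure_preimage f.continuous, closure_Ioi]
    rfl
  refine ⟨hint, hcl, ?_⟩
  ext v
  simp only [frontier, hint, hcl, Set.mem_sdiff, Set.mem_ofPred_eq, not_lt]
  exact ⟨fun h => le_antisymm h.2 h.1, fun h => ⟨h.ge, h.le⟩⟩

end Topology

section Measure

variable {E : Type*} [NormedAddCommGroup E] [NormedSpace ℝ E] [FiniteDimensional ℝ E]

theorem Convex.interior_nonempty_of_forall_mem_or_mem_submodule_or_neg_mem {s : Set E}
    (hs : Convex ℝ s) {B : Submodule ℝ E} (hB : B ≠ ⊤) (hcover : ∀ v, v ∈ s ∨ v ∈ B ∨ -v ∈ s) :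
    (interior s).Nonempty := by
  borelize E
  rw [Set.nonempty_iff_ne_empty]
  intro hs_int
  have hnull : ∀ t : Set E, Convex ℝ t → interior t = ∅ → Measure.addHaar t = 0 :=
    fun t ht ht_int => measure_mono_null
      (by simpa [frontier, ht_int] using subset_closure) (ht.addHaar_frontier _)
  have hneg_int : interior (-s) = ∅ := by
    rw [show -s = Homeomorph.neg E ⁻¹' s from rfl, ← Homeomorph.preimage_interior, hs_int,
      Set.preimage_empty]
  have huniv : (Set.univ : Set E) ⊆ s ∪ B ∪ -s := fun v _ => by
    rcases hcover v with h | h | h <;> simp [h]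
  refine isOpen_univ.measure_ne_zero Measure.addHaar Set.univ_nonempty
    (measure_mono_null huniv ?_)
  refine measure_union_null (measure_union_null (hnull s hs hs_int) ?_) (hnull _ hs.neg hneg_int)
  exact Measure.addHaar_submodule _ B hB

end Measure

/-- In `ℝⁿ` with a signed seminorm of positive maximal value `a`, the level set
`A = {v : ‖v‖ = a}` is a convex cone, and its interior/closure/boundary are the
open/closed half-space and the hyperplane of a linear functional `w`. -/
theorem signedSeminorm_max_level_set
    {n : ℕ} (N : (Fin n → ℝ) → ℝ) (hN : IsSignedSeminormTriv (K := ℝ) N)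
    (a : ℝ) (ha : 0 < a) (hub : ∀ v, N v ≤ a) (hatt : ∃ v, N v = a) :
    Convex ℝ {v : Fin n → ℝ | N v = a} ∧
    (∀ t : ℝ, 0 < t → ∀ v ∈ {v : Fin n → ℝ | N v = a}, t • v ∈ {v : Fin n → ℝ | N v = a}) ∧
    ∃ w : (Fin n → ℝ) →ₗ[ℝ] ℝ,
      interior {v : Fin n → ℝ | N v = a} = {v | 0 < w v} ∧
      closure {v : Fin n → ℝ | N v = a} = {v | 0 ≤ w v} ∧
      frontier {v : Fin n → ℝ | N v = a} = {v | w v = 0} := by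
  set A := hN.levelCone a
  refine ⟨A.convex, fun t ht v hv => A.smul_mem ht hv, ?_⟩
  obtain ⟨v₀, hv₀⟩ := hatt
  set B := hN.absLtSubmodule ha
  have hcover : ∀ v, v ∈ A ∨ v ∈ B ∨ -v ∈ A := hN.map_eq_or_abs_lt_or_map_neg_eq hub
  have hB : B ≠ ⊤ := fun h => by simpa [B, hv₀, abs_of_pos ha] using Submodule.eq_top_iff'.mp h v₀
  obtain ⟨x₀, hx₀⟩ :=
    A.convex.interior_nonempty_of_forall_mem_or_mem_submodule_or_neg_mem hB hcover
  obtain ⟨w, hw_int, hw_neg⟩ := exists_strongDual_pos_of_disjoint_convexCone A.convex.interior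
    isOpen_interior (hN.levelCone (-a)) ⟨-v₀, by simp [hN.map_neg, hv₀]⟩ <|
    Set.disjoint_left.mpr fun x hx hx' => by
      linarith [hN.mem_levelCone.mp (interior_subset hx), hN.mem_levelCone.mp hx']
  have hwA : ∀ v ∈ A, 0 ≤ w v := fun v hv => by
    simpa using hw_neg (-v) (by simpa [hN.map_neg] using hN.mem_levelCone.mp hv)
  have hwB : ∀ u ∈ B, w u = 0 := fun u hu =>
    LinearMap.map_eq_zero_of_forall_nonneg_map_add_smul (f := (w : _ →ₗ[ℝ] ℝ)) (v := v₀) fun t =>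
      hwA _ (hN.map_add_eq_of_neg_lt hub hv₀ (abs_lt.mp (B.smul_mem t hu)).1)
  have hw_ne : w ≠ 0 := fun h => (hw_int x₀ hx₀).ne' (by simp [h])
  have hsub : {v | 0 < w v} ⊆ A := fun v hv => by
    rcases hcover v with h | h | h
    · exact h
    · exact absurd (hwB v h) hv.ne'
    · exact absurd (hwA _ h) (by simpa using hv)
  exact ⟨w,
    interior_closure_frontier_eq_of_setOf_pos_subset_of_subset_setOf_nonneg hw_ne hsub hwA⟩
end
end

section
/- A map X : (ℝ^{n+1})^* → {0,+1,−1} is the sign of a signed seminorm on (ℝ^{n+1})^* (over ℝ with trivial absolute value) if and only if X^+ = X^{-1}(+1) and X^− = X^{-1}(−1) are strictly convex cones not containing 0, and X^0 = X^{-1}(0) is a nonempty linear subspace. -/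
noncomputable section

variable {K : Type*} [Field K] [LinearOrder K] [IsStrictOrderedRing K] {V : Type*} [AddCommGroup V] [Module K V]

/-- A strictly convex cone not containing `0`. -/
def IsStrictConvexCone {W : Type*} [AddCommGroup W] [Module ℝ W] (C : Set W) : Prop :=
  Convex ℝ C ∧ (∀ t : ℝ, 0 < t → ∀ v ∈ C, t • v ∈ C) ∧ (0 : W) ∉ C ∧ ∀ v ∈ C, -v ∉ C

/-!
A signed seminorm `N` for the trivial absolute value is odd, invariant under positive scaling,
and each level set `{N = a}` is closed under addition (squeeze `N (v + w)` between
`min a a` and `max a a`). Hence `{N = ±1}` are convex cones exchanged by `v ↦ -v` and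
`{N = 0}` is a subspace.

Conversely, the cones and the subspace make a `{0, ±1}`-valued `X` odd and invariant under
positive scaling, and the lower bound `min (X v) (X w) ≤ X (v + w)` follows from the upper one
by oddness. For the upper bound the only case not settled by a single cone or the subspace is
`X v = -1`, `X w = 0`, `X (v + w) = 1`, which is impossible: `w = -v + (v + w)` would then lie in
the positive cone.
-/

variable {E : Type*} [AddCommGroup E] [Module ℝ E]

lemma sgn_of_pos {x : ℝ} (h : 0 < x) : sgn x = 1 := by simp [sgn, h]

lemma sgn_of_neg {x : ℝ} (h : x < 0) : sgn x = -1 := by simp [sgn, h, h.not_gt]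

lemma convex_of_pos_smul_mem_of_add_mem {s : Set E}
    (hsmul : ∀ t : ℝ, 0 < t → ∀ v ∈ s, t • v ∈ s) (hadd : ∀ v ∈ s, ∀ w ∈ s, v + w ∈ s) :
    Convex ℝ s :=
  convex_iff_forall_pos.2 fun v hv w hw a b ha hb _ => hadd _ (hsmul a ha v hv) _ (hsmul b hb w hw)

lemma Convex.add_mem_of_pos_smul_mem {s : Set E} (hs : Convex ℝ s)
    (hsmul : ∀ t : ℝ, 0 < t → ∀ v ∈ s, t • v ∈ s) {v w : E} (hv : v ∈ s) (hw : w ∈ s) :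
    v + w ∈ s := by
  have hmid : (1 / 2 : ℝ) • v + (1 / 2 : ℝ) • w ∈ s :=
    hs hv hw (by norm_num) (by norm_num) (by norm_num)
  convert hsmul 2 two_pos _ hmid using 1
  module

namespace IsSignedSeminormTriv

variable {N : E → ℝ}

lemma map_zero_s10 (hN : IsSignedSeminormTriv (K := ℝ) N) : N 0 = 0 := by
  simpa [sgn] using hN.1 0 0

lemma map_neg_s10 (hN : IsSignedSeminormTriv (K := ℝ) N) (v : E) : N (-v) = -N v := by
  simpa [sgn_of_neg (neg_one_lt_zero : (-1 : ℝ) < 0)] using hN.1 (-1) v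

lemma map_smul_of_pos_s10 (hN : IsSignedSeminormTriv (K := ℝ) N) {t : ℝ} (ht : 0 < t) (v : E) :
    N (t • v) = N v := by
  rw [hN.1, sgn_of_pos ht, one_mul]

lemma map_add_of_eq (hN : IsSignedSeminormTriv (K := ℝ) N) {a : ℝ} {v w : E}
    (hv : N v = a) (hw : N w = a) : N (v + w) = a := by
  have h := hN.2 v w
  rw [hv, hw, min_self, max_self] at h
  exact le_antisymm h.2 h.1

lemma isStrictConvexCone_setOf_eq (hN : IsSignedSeminormTriv (K := ℝ) N) {a : ℝ} (ha : a ≠ 0) :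
    IsStrictConvexCone {v | N v = a} := by
  have hsmul : ∀ t : ℝ, 0 < t → ∀ v ∈ {v | N v = a}, t • v ∈ {v | N v = a} :=
    fun t ht v hv => (hN.map_smul_of_pos_s10 ht v).trans hv
  refine ⟨convex_of_pos_smul_mem_of_add_mem hsmul fun v hv w hw => hN.map_add_of_eq hv hw,
    hsmul, fun h => ha (h.symm.trans hN.map_zero_s10), fun v (hv : N v = a) (hv' : N (-v) = a) => ?_⟩
  exact ha (by linarith [hN.map_neg_s10 v])

lemma exists_submodule_coe_eq (hN : IsSignedSeminormTriv (K := ℝ) N) :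
    ∃ W : Submodule ℝ E, (W : Set E) = {v | N v = 0} :=
  ⟨{ carrier := {v | N v = 0}
     add_mem' := hN.map_add_of_eq
     zero_mem' := hN.map_zero_s10
     smul_mem' := fun c v (hv : N v = 0) => by
       change N (c • v) = 0
       rw [hN.1, hv, mul_zero] }, rfl⟩

lemma of_map_neg_of_map_smul_of_le_max (hneg : ∀ v, N (-v) = -N v)
    (hsmul : ∀ t : ℝ, 0 < t → ∀ v, N (t • v) = N v)
    (hmax : ∀ v w, N (v + w) ≤ max (N v) (N w)) : IsSignedSeminormTriv (K := ℝ) N := by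
  refine ⟨fun c v => ?_, fun v w => ⟨?_, hmax v w⟩⟩
  · rcases lt_trichotomy c 0 with hc | rfl | hc
    · rw [sgn_of_neg hc, ← neg_neg c, neg_smul, hneg, hsmul _ (neg_pos.2 hc)]
      ring
    · have h0 := hneg 0
      rw [neg_zero] at h0
      simp [sgn, show N 0 = 0 by linarith]
    · rw [sgn_of_pos hc, hsmul c hc, one_mul]
  · have := hmax (-v) (-w)
    rw [← neg_add, hneg, hneg, hneg, max_neg_neg] at this
    linarith

end IsSignedSeminormTriv

section Ternary

variable {X : E → ℝ} {W : Submodule ℝ E}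

lemma map_neg_of_ternary (hval : ∀ e, X e = 0 ∨ X e = 1 ∨ X e = -1)
    (hP : ∀ v ∈ {e | X e = 1}, -v ∉ {e | X e = 1})
    (hN : ∀ v ∈ {e | X e = -1}, -v ∉ {e | X e = -1})
    (hW : ∀ e, e ∈ W ↔ X e = 0) (e : E) : X (-e) = -X e := by
  have hzero : X (-e) = 0 ↔ X e = 0 := by rw [← hW, ← hW, W.neg_mem_iff]
  rcases hval e with h | h | h <;> rcases hval (-e) with h' | h' | h' <;>
    simp_all

lemma map_smul_of_pos_of_ternary (hval : ∀ e, X e = 0 ∨ X e = 1 ∨ X e = -1)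
    (hP : ∀ t : ℝ, 0 < t → ∀ v ∈ {e | X e = 1}, t • v ∈ {e | X e = 1})
    (hN : ∀ t : ℝ, 0 < t → ∀ v ∈ {e | X e = -1}, t • v ∈ {e | X e = -1})
    (hW : ∀ e, e ∈ W ↔ X e = 0) {t : ℝ} (ht : 0 < t) (e : E) : X (t • e) = X e := by
  rcases hval e with h | h | h <;> rw [h]
  · exact (hW _).1 (W.smul_mem t ((hW e).2 h))
  · exact hP t ht e h
  · exact hN t ht e h

lemma map_add_le_max_of_ternary (hval : ∀ e, X e = 0 ∨ X e = 1 ∨ X e = -1)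
    (hPadd : ∀ v w, X v = 1 → X w = 1 → X (v + w) = 1)
    (hNadd : ∀ v w, X v = -1 → X w = -1 → X (v + w) = -1)
    (hneg : ∀ e, X (-e) = -X e) (hW : ∀ e, e ∈ W ↔ X e = 0) (v w : E) :
    X (v + w) ≤ max (X v) (X w) := by
  have hZadd : X v = 0 → X w = 0 → X (v + w) = 0 := fun hv hw =>
    (hW _).1 (W.add_mem ((hW v).2 hv) ((hW w).2 hw))
  have hcancel : ∀ a b : E, X a = -1 → X (a + b) = 1 → X b = 1 := fun a b ha hab => by
    simpa using hPadd (-a) (a + b) (by rw [hneg, ha, neg_neg]) hab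
  have hcancel' : X w = -1 → X (v + w) = 1 → X v = 1 := fun hw hvw =>
    hcancel w v hw (by rwa [add_comm])
  rcases hval v with hv | hv | hv <;> rcases hval w with hw | hw | hw <;>
    rcases hval (v + w) with h | h | h <;> rw [hv, hw, h] <;> norm_num <;>
    first
    | linarith [hZadd hv hw]
    | linarith [hNadd v w hv hw]
    | linarith [hcancel v w hv h]
    | linarith [hcancel' hw h]

end Ternary

/-- A `{0,±1}`-valued map on `(ℝ^{n+1})^*` is (the sign of) a signed seminorm iff
its positive and negative parts are strictly convex cones without `0` and its
zero set is a (nonempty) linear subspace. -/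
theorem sign_of_signedSeminorm_iff {n : ℕ}
    (X : Module.Dual ℝ (Fin (n + 1) → ℝ) → ℝ)
    (hval : ∀ e, X e = 0 ∨ X e = 1 ∨ X e = -1) :
    IsSignedSeminormTriv (K := ℝ) X ↔
      (IsStrictConvexCone {e | X e = 1} ∧ IsStrictConvexCone {e | X e = -1} ∧
        ∃ W : Submodule ℝ (Module.Dual ℝ (Fin (n + 1) → ℝ)), (W : Set _) = {e | X e = 0}) := by
  constructor
  · intro hX
    exact ⟨hX.isStrictConvexCone_setOf_eq one_ne_zero,
      hX.isStrictConvexCone_setOf_eq (neg_ne_zero.2 one_ne_zero), hX.exists_submodule_coe_eq⟩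
  · rintro ⟨⟨hPconv, hPsmul, -, hPneg⟩, ⟨hNconv, hNsmul, -, hNneg⟩, W, hW⟩
    have hmem : ∀ e, e ∈ W ↔ X e = 0 := fun e => Set.ext_iff.1 hW e
    have hneg := map_neg_of_ternary hval hPneg hNneg hmem
    exact .of_map_neg_of_map_smul_of_le_max hneg
      (fun t ht => map_smul_of_pos_of_ternary hval hPsmul hNsmul hmem ht)
      (map_add_le_max_of_ternary hval (fun _ _ => hPconv.add_mem_of_pos_smul_mem hPsmul)
        (fun _ _ => hNconv.add_mem_of_pos_smul_mem hNsmul) hneg hmem)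
end
end
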